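/- (Phase-1 of 2P-UPBReD reaches full contribution in the utility framework.) Let n ≥ 2 agents have convex differentiable costs c_i on S_i = [0, s_i^max], accuracies a_i(w,s) nondecreasing in s_i, and let β > max_{i∈N} c_i'(s_i^max), so that Δ_i := β − c_i'(s_i^max) > 0 for all i. With utilities u_i(w,s) = a_i(w,s) − c_i(s_i) + β·(s_i − (1/(n−1))∑_{j≠i} s_j), run the Phase-1 update s_i^{t+1} = min(s_i^t + γ·∂u_i/∂s_i(w⁰, s^t), s_i^max) at a fixed parameter w⁰. Then s^max is a fixed point of this update, and for every integer κ ≥ max_i (s_i^max − s_i⁰)/(γ·Δ_i), the iterate satisfies s_i^κ = s_i^max for all i ∈ N. -/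

import Mathlib

/-- The partial derivative of `F(w,s)` with respect to the coordinate `s_j`. -/
noncomputable def pderivS {n m : ℕ} (F : (Fin m → ℝ) → (Fin n → ℝ) → ℝ)
    (j : Fin n) (w : Fin m → ℝ) (s : Fin n → ℝ) : ℝ :=
  deriv (fun x : ℝ => F w (Function.update s j x)) (s j)

/-- Agent `i`'s utility under the budget-balanced payment:
`u_i(w,s) = a_i(w,s) − c_i(s_i) + β(s_i − (1/(n−1))∑_{j≠i}s_j)`. -/
noncomputable def util {n m : ℕ} (a : Fin n → (Fin m → ℝ) → (Fin n → ℝ) → ℝ)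
    (c : Fin n → ℝ → ℝ) (β : ℝ) (i : Fin n) (w : Fin m → ℝ) (s : Fin n → ℝ) : ℝ :=
  a i w s - c i (s i) + β * (s i - (1 / ((n : ℝ) - 1)) * ∑ j ∈ Finset.univ.erase i, s j)

lemma pderiv_util {n m : ℕ} (a : Fin n → (Fin m → ℝ) → (Fin n → ℝ) → ℝ)
    (c : Fin n → ℝ → ℝ) (β : ℝ) (i : Fin n) (w : Fin m → ℝ) (s : Fin n → ℝ)
    (hcdiff : Differentiable ℝ (c i))
    (hadiff : DifferentiableAt ℝ (fun x : ℝ => a i w (Function.update s i x)) (s i)) :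
    pderivS (util a c β i) i w s = pderivS (a i) i w s - deriv (c i) (s i) + β := by
  have hK : ∀ x : ℝ, ∑ j ∈ Finset.univ.erase i, Function.update s i x j
      = ∑ j ∈ Finset.univ.erase i, s j := by
    intro x
    refine Finset.sum_congr rfl fun j hj => ?_
    exact Function.update_of_ne (Finset.ne_of_mem_erase hj) _ _
  set K := ∑ j ∈ Finset.univ.erase i, s j
  have heq : (fun x : ℝ => util a c β i w (Function.update s i x))
      = fun x : ℝ => a i w (Function.update s i x) - c i x
        + β * (x - (1 / ((n : ℝ) - 1)) * K) := by
    funext x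
    simp [util, Function.update_self, hK x]
  unfold pderivS
  rw [heq]
  rw [deriv_fun_add (hadiff.fun_sub (hcdiff (s i))) (by fun_prop)]
  rw [deriv_fun_sub hadiff (hcdiff (s i))]
  have : deriv (fun x : ℝ => β * (x - 1 / ((n:ℝ) - 1) * K)) (s i) = β := by
    rw [deriv_const_mul _ (by fun_prop)]
    simp
  rw [this]

/-- Phase 1 of 2P-UPBReD reaches full contribution: with convex differentiable costs,
accuracies nondecreasing in own contribution, and `β > c_i'(s_i^max)` for all `i`, the
clamped gradient-ascent update `s_i^{t+1} = min(s_i^t + γ ∂u_i/∂s_i(w⁰,s^t), s_i^max)`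
has `s^max` as a fixed point, and `s^κ = s^max` for every integer
`κ ≥ max_i (s_i^max − s_i⁰)/(γ Δ_i)` with `Δ_i = β − c_i'(s_i^max)`. -/
theorem phase_one_full_contribution {n m : ℕ} (hn : 2 ≤ n)
    (a : Fin n → (Fin m → ℝ) → (Fin n → ℝ) → ℝ) (c : Fin n → ℝ → ℝ)
    (smax : Fin n → ℝ) (hsm : ∀ i, 0 ≤ smax i)
    (hcconv : ∀ i, ConvexOn ℝ (Set.Icc 0 (smax i)) (c i))
    (hcdiff : ∀ i, Differentiable ℝ (c i))
    (hadiff : ∀ i (w : Fin m → ℝ) (s : Fin n → ℝ),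
      DifferentiableAt ℝ (fun x : ℝ => a i w (Function.update s i x)) (s i))
    (hamono : ∀ i (w : Fin m → ℝ) (s : Fin n → ℝ), 0 ≤ pderivS (a i) i w s)
    (β : ℝ) (hβ : ∀ i, deriv (c i) (smax i) < β)
    (γ : ℝ) (hγ : 0 < γ) (w0 : Fin m → ℝ)
    (s : ℕ → Fin n → ℝ) (hs0 : ∀ i, s 0 i ∈ Set.Icc 0 (smax i))
    (hupd : ∀ t i, s (t + 1) i
      = min (s t i + γ * pderivS (util a c β i) i w0 (s t)) (smax i)) :
    (∀ t, s t = smax → s (t + 1) = smax) ∧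
    (∀ κ : ℕ, (∀ i, (smax i - s 0 i) / (γ * (β - deriv (c i) (smax i))) ≤ (κ : ℝ)) →
      s κ = smax) := by
  set Δ : Fin n → ℝ := fun i => β - deriv (c i) (smax i) with hΔ
  have hΔpos : ∀ i, 0 < Δ i := fun i => sub_pos.mpr (hβ i)
  -- derivative lower bound at any point with i-th coord in [0, smax i]
  have key : ∀ (v : Fin n → ℝ) (i : Fin n), v i ∈ Set.Icc 0 (smax i) →
      Δ i ≤ pderivS (util a c β i) i w0 v := by
    intro v i hv
    rw [pderiv_util a c β i w0 v (hcdiff i) (hadiff i w0 v)]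
    have hc_le : deriv (c i) (v i) ≤ deriv (c i) (smax i) := by
      rcases lt_or_eq_of_le hv.2 with h | h
      · calc deriv (c i) (v i) ≤ slope (c i) (v i) (smax i) :=
              (hcconv i).deriv_le_slope hv ⟨hsm i, le_refl _⟩ h ((hcdiff i) _)
          _ ≤ deriv (c i) (smax i) :=
              (hcconv i).slope_le_deriv hv ⟨hsm i, le_refl _⟩ h ((hcdiff i) _)
      · rw [h]
    have := hamono i w0 v
    simp only [hΔ]
    linarith
  -- invariant
  have inv : ∀ t i, s t i ∈ Set.Icc 0 (smax i) ∧
      min (s 0 i + t * (γ * Δ i)) (smax i) ≤ s t i := by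
    intro t
    induction t with
    | zero =>
      intro i
      refine ⟨hs0 i, ?_⟩
      simp [min_le_iff, le_refl]
    | succ t ih =>
      intro i
      obtain ⟨hmem, hlb⟩ := ih i
      have hd := key (s t) i hmem
      have hdpos : 0 < pderivS (util a c β i) i w0 (s t) := lt_of_lt_of_le (hΔpos i) hd
      rw [hupd t i]
      constructor
      · constructor
        · refine le_min ?_ (hsm i)
          have : 0 ≤ γ * pderivS (util a c β i) i w0 (s t) := by positivity
          linarith [hmem.1]
        · exact min_le_right _ _
      · have hstep : γ * Δ i ≤ γ * pderivS (util a c β i) i w0 (s t) :=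
          mul_le_mul_of_nonneg_left hd hγ.le
        rcases le_or_gt (s 0 i + t * (γ * Δ i)) (smax i) with h | h
        · rw [min_eq_left h] at hlb
          have hA : s 0 i + (↑(t + 1) : ℝ) * (γ * Δ i)
              ≤ s t i + γ * pderivS (util a c β i) i w0 (s t) := by
            push_cast; nlinarith
          exact min_le_min hA le_rfl
        · rw [min_eq_right h.le] at hlb
          have hst : s t i = smax i := le_antisymm hmem.2 hlb
          have hB : smax i ≤ s t i + γ * pderivS (util a c β i) i w0 (s t) := by
            nlinarith
          rw [min_eq_right hB]
          exact min_le_right _ _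
  constructor
  · intro t ht
    funext i
    have hd := key smax i ⟨hsm i, le_rfl⟩
    have hdpos : 0 < pderivS (util a c β i) i w0 smax := lt_of_lt_of_le (hΔpos i) hd
    rw [hupd t i, ht]
    have : smax i ≤ smax i + γ * pderivS (util a c β i) i w0 smax := by nlinarith
    exact min_eq_right this
  · intro κ hκ
    funext i
    obtain ⟨hmem, hlb⟩ := inv κ i
    have hκi := hκ i
    have hpos : 0 < γ * Δ i := by have := hΔpos i; positivity
    rw [div_le_iff₀ hpos] at hκi
    have hA : smax i ≤ s 0 i + (κ : ℝ) * (γ * Δ i) := by nlinarith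
    rw [min_eq_right hA] at hlb
    exact le_antisymm hmem.2 hlb
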